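/- arXiv:2411.04893 — 3 statements merged into one kernel-verified Lean document; each statement's English description precedes it below -/
import Mathlib

section
/- If λ and μ are distinct partitions of n with λ dominating μ (i.e., for all j, λ₁+⋯+λⱼ ≥ μ₁+⋯+μⱼ), then the total content of λ strictly exceeds that of μ, where the total content of a partition ν is the sum over all boxes (x,y) of its Young diagram of (y − x) (column index minus row index). -/
/-!
Write `dᵢ = lᵢ - mᵢ` and `Dₖ = d₀ + ⋯ + d_{k-1}`, so that dominance says `Dₖ ≥ 0`, with
`D₀ = Dₙ = 0`. Row `i` of length `a` has content `a (a - 1 - 2i) / 2`, so twice the difference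
of the total contents is `∑ᵢ cᵢ dᵢ` with `cᵢ = lᵢ + mᵢ - 1 - 2i`. Summation by parts turns this
into `∑ᵢ (cᵢ - cᵢ₊₁) Dᵢ₊₁`, where `cᵢ - cᵢ₊₁ ≥ 2` because both partitions are weakly decreasing;
and some `Dₖ` is positive since `l ≠ m`.
-/

open Finset

theorem Finset.sum_mul_pos_of_partial_sums_nonneg {R : Type*} [CommRing R] [LinearOrder R]
    [IsStrictOrderedRing R] {c d : ℕ → R} {n : ℕ} (hc : StrictAnti c)
    (hD : ∀ k ≤ n, 0 ≤ ∑ i ∈ range k, d i) (hDn : ∑ i ∈ range n, d i = 0)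
    (hpos : ∃ k < n, 0 < ∑ i ∈ range k, d i) :
    0 < ∑ i ∈ range n, c i * d i := by
  obtain ⟨k, hkn, hk⟩ := hpos
  have hk0 : k ≠ 0 := by rintro rfl; simp at hk
  simp_rw [← smul_eq_mul, sum_range_by_parts c d n, hDn, smul_zero, zero_sub, ← sum_neg_distrib,
    ← neg_smul, neg_sub, smul_eq_mul]
  refine sum_pos' (fun i hi => ?_) ⟨k - 1, mem_range.2 (by omega), ?_⟩
  · have := mem_range.1 hi
    exact mul_nonneg (sub_nonneg.2 (hc i.lt_succ_self).le) (hD _ (by omega))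
  · rw [Nat.sub_one_add_one hk0]
    exact mul_pos (sub_pos.2 (hc (by omega))) hk

theorem exists_sum_range_lt_of_forall_sum_range_le_of_ne {l m : ℕ → ℕ} {n : ℕ}
    (hl : Antitone l) (hm : Antitone m) (hl0 : l n = 0) (hm0 : m n = 0)
    (hsum : ∑ i ∈ range n, m i = ∑ i ∈ range n, l i)
    (hdom : ∀ k, ∑ i ∈ range k, m i ≤ ∑ i ∈ range k, l i) (hne : l ≠ m) :
    ∃ k < n, ∑ i ∈ range k, m i < ∑ i ∈ range k, l i := by
  by_contra! h
  have heq : ∀ k ≤ n, ∑ i ∈ range k, m i = ∑ i ∈ range k, l i := fun k hk =>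
    hk.lt_or_eq.elim (fun hk => le_antisymm (hdom k) (h k hk)) (· ▸ hsum)
  refine hne (funext fun i => ?_)
  rcases lt_or_ge i n with hi | hi
  · have := heq (i + 1) hi
    rw [sum_range_succ, sum_range_succ, heq i hi.le] at this
    omega
  · have := hl hi
    have := hm hi
    omega

theorem two_mul_sum_range_sub (a i : ℕ) :
    2 * ∑ j ∈ range a, ((j : ℤ) - i) = a * (a - 1 - 2 * i) := by
  induction a with
  | zero => simp
  | succ a ih => rw [sum_range_succ, mul_add, ih]; push_cast; ring

theorem two_mul_sum_range_sub_sub (a b i : ℕ) :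
    2 * ∑ j ∈ range a, ((j : ℤ) - i) - 2 * ∑ j ∈ range b, ((j : ℤ) - i) =
      (a + b - 1 - 2 * i) * (a - b) := by
  rw [two_mul_sum_range_sub, two_mul_sum_range_sub]
  ring

/-- If `l` and `m` are distinct partitions of `n` (written as antitone sequences of parts,
vanishing from index `n` on) with `l` dominating `m`, then the total content of `l`
strictly exceeds that of `m`, where the total content is the sum over boxes `(i,j)`
(0-based row `i`, column `j`) of `j − i`. -/
theorem stmt5 (n : ℕ) (l m : ℕ → ℕ)
    (hl : Antitone l) (hm : Antitone m)
    (hl0 : l n = 0) (hm0 : m n = 0)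
    (hln : ∑ i ∈ Finset.range n, l i = n) (hmn : ∑ i ∈ Finset.range n, m i = n)
    (hdom : ∀ j : ℕ, ∑ i ∈ Finset.range j, m i ≤ ∑ i ∈ Finset.range j, l i)
    (hne : l ≠ m) :
    ∑ i ∈ Finset.range n, ∑ j ∈ Finset.range (m i), ((j : ℤ) - (i : ℤ)) <
      ∑ i ∈ Finset.range n, ∑ j ∈ Finset.range (l i), ((j : ℤ) - (i : ℤ)) := by
  set c : ℕ → ℤ := fun i => l i + m i - 1 - 2 * i
  set d : ℕ → ℤ := fun i => l i - m i
  have hcontent : 2 * (∑ i ∈ range n, ∑ j ∈ range (l i), ((j : ℤ) - i) -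
      ∑ i ∈ range n, ∑ j ∈ range (m i), ((j : ℤ) - i)) = ∑ i ∈ range n, c i * d i := by
    rw [mul_sub, mul_sum, mul_sum, ← sum_sub_distrib]
    exact sum_congr rfl fun i _ => two_mul_sum_range_sub_sub _ _ _
  have hc : StrictAnti c := strictAnti_nat_of_succ_lt fun i => by
    have := hl (Nat.le_add_right i 1)
    have := hm (Nat.le_add_right i 1)
    simp only [c]
    push_cast
    omega
  have hD (k : ℕ) : ∑ i ∈ range k, d i = ∑ i ∈ range k, (l i : ℤ) - ∑ i ∈ range k, (m i : ℤ) :=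
    sum_sub_distrib _ _
  have hpos : 0 < ∑ i ∈ range n, c i * d i := by
    refine sum_mul_pos_of_partial_sums_nonneg hc (fun k _ => ?_) ?_ ?_
    · rw [hD, sub_nonneg]
      exact_mod_cast hdom k
    · rw [hD, sub_eq_zero]
      exact_mod_cast hln.trans hmn.symm
    · obtain ⟨k, hkn, hk⟩ :=
        exists_sum_range_lt_of_forall_sum_range_le_of_ne hl hm hl0 hm0 (hmn.trans hln.symm) hdom hne
      refine ⟨k, hkn, ?_⟩
      rw [hD, sub_pos]
      exact_mod_cast hk
  linarith
end

section
/- Let P be the transition matrix of a finite irreducible Markov chain. For a nonempty proper subset S of the state space and states x, y ∈ S, define the induced transition probability P̃(x,y) = P(x,y) + Σ_{n≥1} Σ_{x₁,…,xₙ ∉ S} P(x,x₁)P(x₁,x₂)⋯P(xₙ,y). Then the series converges and P̃ is row-stochastic: Σ_{y ∈ S} P̃(x,y) = 1 for every x ∈ S. -/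
/-!
Split the excursions of length `k + 2` from `x` according to their last state: those ending
in `S` contribute `∑_{y ∈ S} P̃ₖ(x, y)`, the others are the paths staying outside `S` for
`k + 2` steps. Hence `∑_{y ∈ S} P̃ₖ(x, y) = Vₖ(x) - Vₖ₊₁(x)`, where `Vₖ(x)` is the probability of
avoiding `S` during steps `1, …, k + 1`, and the series telescopes to `V₀(x) - lim Vₙ(x)`, with
`V₀(x) = ∑_{z ∉ S} P(x, z)`. Irreducibility makes the limit vanish: if `Pᵐ > 0` then
`Pᵐ⁺¹ > 0`, so from any state the chain avoids `S` for `m + 1` steps with probability at most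
some `r < 1`, and `Vₙ` decays geometrically.
-/

open Finset Filter Topology

lemma Finset.sum_add_sum_subtype_notMem {X M : Type*} [Fintype X] [DecidableEq X]
    [AddCommMonoid M] (S : Finset X) (f : X → M) :
    ∑ y ∈ S, f y + ∑ z : {z // z ∉ S}, f z = ∑ y, f y := by
  rw [← Finset.sum_coe_sort S f]
  convert Fintype.sum_subtype_add_sum_subtype (· ∈ S) f

namespace Matrix

variable {X : Type*} [Fintype X] [DecidableEq X] (P : Matrix X X ℝ) (S : Finset X)

/-- The probability that the chain started at `x` spends steps `1, …, k + 1` outside `S`. -/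
def stayOutWeight (k : ℕ) (x : X) : ℝ :=
  ∑ q : Fin (k + 1) → {z : X // z ∉ S}, P x (q 0) * ∏ i : Fin k, P (q i.castSucc) (q i.succ)

/-- The `k`-th term of the excursion series: leave `S`, spend `k + 1` steps outside,
then first re-enter at `y` (when `y ∈ S`). -/
def excursionWeight (k : ℕ) (x y : X) : ℝ :=
  ∑ q : Fin (k + 1) → {z : X // z ∉ S},
    P x (q 0) * (∏ i : Fin k, P (q i.castSucc) (q i.succ)) * P (q (Fin.last k)) y

variable {P}

lemma stayOutWeight_nonneg (hP : ∀ i j, 0 ≤ P i j) (k : ℕ) (x : X) :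
    0 ≤ P.stayOutWeight S k x :=
  sum_nonneg fun _ _ => mul_nonneg (hP _ _) (prod_nonneg fun _ _ => hP _ _)

lemma excursionWeight_nonneg (hP : ∀ i j, 0 ≤ P i j) (k : ℕ) (x y : X) :
    0 ≤ P.excursionWeight S k x y :=
  sum_nonneg fun _ _ => mul_nonneg (mul_nonneg (hP _ _) (prod_nonneg fun _ _ => hP _ _)) (hP _ _)

variable (P)

lemma stayOutWeight_zero (x : X) : P.stayOutWeight S 0 x = ∑ z : {z // z ∉ S}, P x z := by
  rw [stayOutWeight, ← (Equiv.funUnique (Fin 1) {z : X // z ∉ S}).symm.sum_comp]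
  simp

lemma stayOutWeight_succ (k : ℕ) (x : X) :
    P.stayOutWeight S (k + 1) x = ∑ z : {z // z ∉ S}, P x z * P.stayOutWeight S k z := by
  rw [stayOutWeight, ← (Fin.consEquiv fun _ => {z : X // z ∉ S}).sum_comp,
    Fintype.sum_prod_type]
  refine sum_congr rfl fun z _ => ?_
  rw [stayOutWeight, mul_sum]
  refine sum_congr rfl fun q _ => ?_
  simp only [Fin.consEquiv_apply, Fin.prod_univ_succ, Fin.castSucc_zero, Fin.cons_zero,
    ← Fin.succ_castSucc, Fin.cons_succ]

lemma stayOutWeight_succ_eq_sum_excursionWeight (k : ℕ) (x : X) :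
    P.stayOutWeight S (k + 1) x = ∑ z : {z // z ∉ S}, P.excursionWeight S k x z := by
  rw [stayOutWeight, ← (Fin.snocEquiv fun _ => {z : X // z ∉ S}).sum_comp,
    Fintype.sum_prod_type]
  refine sum_congr rfl fun z _ => sum_congr rfl fun q _ => ?_
  simp only [Fin.snocEquiv_apply, ← Fin.castSucc_zero, Fin.prod_univ_castSucc, Fin.succ_castSucc,
    Fin.snoc_castSucc, Fin.succ_last, Fin.snoc_last]
  ring

variable {P}

lemma sum_excursionWeight (hP : P ∈ rowStochastic ℝ X) (k : ℕ) (x : X) :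
    ∑ y, P.excursionWeight S k x y = P.stayOutWeight S k x := by
  simp only [excursionWeight, stayOutWeight]
  rw [sum_comm]
  exact sum_congr rfl fun q _ => by rw [← mul_sum, sum_row_of_mem_rowStochastic hP, mul_one]

lemma sum_mem_excursionWeight (hP : P ∈ rowStochastic ℝ X) (k : ℕ) (x : X) :
    ∑ y ∈ S, P.excursionWeight S k x y =
      P.stayOutWeight S k x - P.stayOutWeight S (k + 1) x := by
  rw [stayOutWeight_succ_eq_sum_excursionWeight, ← sum_excursionWeight S hP,
    ← sum_add_sum_subtype_notMem S, add_sub_cancel_right]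

lemma sum_range_sum_mem_excursionWeight (hP : P ∈ rowStochastic ℝ X) (n : ℕ) (x : X) :
    ∑ k ∈ range n, ∑ y ∈ S, P.excursionWeight S k x y =
      P.stayOutWeight S 0 x - P.stayOutWeight S n x := by
  simp only [sum_mem_excursionWeight S hP]
  exact sum_range_sub' _ n

lemma stayOutWeight_antitone (hP : P ∈ rowStochastic ℝ X) (x : X) :
    Antitone fun k => P.stayOutWeight S k x :=
  antitone_nat_of_succ_le fun k => sub_nonneg.mp <| sum_mem_excursionWeight S hP k x ▸
    sum_nonneg fun _ _ => excursionWeight_nonneg S (fun _ _ => nonneg_of_mem_rowStochastic hP) _ _ _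

lemma stayOutWeight_zero_le_one (hP : P ∈ rowStochastic ℝ X) (x : X) :
    P.stayOutWeight S 0 x ≤ 1 := by
  rw [stayOutWeight_zero, ← sum_row_of_mem_rowStochastic hP x, ← sum_add_sum_subtype_notMem S]
  exact le_add_of_nonneg_left (sum_nonneg fun _ _ => nonneg_of_mem_rowStochastic hP)

lemma summable_excursionWeight (hP : P ∈ rowStochastic ℝ X) {x y : X} (hy : y ∈ S) :
    Summable fun k => P.excursionWeight S k x y := by
  have hnn : ∀ i j, 0 ≤ P i j := fun _ _ => nonneg_of_mem_rowStochastic hP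
  refine summable_of_sum_range_le (c := 1) (fun k => excursionWeight_nonneg S hnn k x y)
    fun n => ?_
  calc ∑ k ∈ range n, P.excursionWeight S k x y
      ≤ ∑ k ∈ range n, ∑ y' ∈ S, P.excursionWeight S k x y' :=
        sum_le_sum fun k _ => single_le_sum (fun y' _ => excursionWeight_nonneg S hnn k x y') hy
    _ = P.stayOutWeight S 0 x - P.stayOutWeight S n x := sum_range_sum_mem_excursionWeight S hP n x
    _ ≤ 1 := by
      linarith [stayOutWeight_zero_le_one S hP x, stayOutWeight_nonneg S hnn n x]

lemma stayOutWeight_le_sum_pow (hP : P ∈ rowStochastic ℝ X) (k : ℕ) (x : X) :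
    P.stayOutWeight S k x ≤ ∑ t : {t // t ∉ S}, (P ^ (k + 1)) x t := by
  induction k generalizing x with
  | zero => rw [stayOutWeight_zero, zero_add, pow_one]
  | succ k ih =>
    have hpow : ∀ i j, 0 ≤ (P ^ (k + 1)) i j := fun _ _ =>
      nonneg_of_mem_rowStochastic (pow_mem hP _)
    calc P.stayOutWeight S (k + 1) x
        = ∑ z : {z // z ∉ S}, P x z * P.stayOutWeight S k z := stayOutWeight_succ P S k x
      _ ≤ ∑ z : {z // z ∉ S}, P x z * ∑ t : {t // t ∉ S}, (P ^ (k + 1)) z t :=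
        sum_le_sum fun z _ => mul_le_mul_of_nonneg_left (ih z) (nonneg_of_mem_rowStochastic hP)
      _ ≤ ∑ z, P x z * ∑ t : {t // t ∉ S}, (P ^ (k + 1)) z t := by
        rw [← sum_add_sum_subtype_notMem S]
        exact le_add_of_nonneg_left (sum_nonneg fun _ _ => mul_nonneg
          (nonneg_of_mem_rowStochastic hP) (sum_nonneg fun _ _ => hpow _ _))
      _ = ∑ t : {t // t ∉ S}, (P ^ (k + 1 + 1)) x t := by
        simp only [pow_succ' P (k + 1), mul_apply, mul_sum]
        exact sum_comm

lemma stayOutWeight_lt_one (hP : P ∈ rowStochastic ℝ X) {k : ℕ} {x s : X} (hs : s ∈ S)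
    (hpos : 0 < (P ^ (k + 1)) x s) : P.stayOutWeight S k x < 1 := by
  have hsum := sum_add_sum_subtype_notMem S ((P ^ (k + 1)) x)
  rw [sum_row_of_mem_rowStochastic (pow_mem hP _)] at hsum
  have hmass : 0 < ∑ y ∈ S, (P ^ (k + 1)) x y :=
    (sum_pos_iff_of_nonneg fun _ _ => nonneg_of_mem_rowStochastic (pow_mem hP _)).mpr
      ⟨s, hs, hpos⟩
  linarith [stayOutWeight_le_sum_pow S hP k x]

lemma stayOutWeight_add_succ_le (hP : ∀ i j, 0 ≤ P i j) {b : ℕ} {r : ℝ}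
    (hr : ∀ z, P.stayOutWeight S b z ≤ r) (a : ℕ) (x : X) :
    P.stayOutWeight S (a + b + 1) x ≤ P.stayOutWeight S a x * r := by
  induction a generalizing x with
  | zero =>
    rw [zero_add, stayOutWeight_succ, stayOutWeight_zero, sum_mul]
    exact sum_le_sum fun z _ => mul_le_mul_of_nonneg_left (hr z) (hP _ _)
  | succ a ih =>
    rw [Nat.add_right_comm a 1 b, stayOutWeight_succ, stayOutWeight_succ, sum_mul]
    exact sum_le_sum fun z _ => (mul_le_mul_of_nonneg_left (ih z) (hP _ _)).trans_eq
      (mul_assoc _ _ _).symm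

lemma stayOutWeight_mul_le_pow (hP : P ∈ rowStochastic ℝ X) {b : ℕ} {r : ℝ} (hr0 : 0 ≤ r)
    (hr : ∀ z, P.stayOutWeight S b z ≤ r) (j : ℕ) (x : X) :
    P.stayOutWeight S (j * (b + 1)) x ≤ r ^ j := by
  induction j with
  | zero => simpa using stayOutWeight_zero_le_one S hP x
  | succ j ih =>
    calc P.stayOutWeight S ((j + 1) * (b + 1)) x
        = P.stayOutWeight S (j * (b + 1) + b + 1) x := by rw [Nat.succ_mul, add_assoc]
      _ ≤ P.stayOutWeight S (j * (b + 1)) x * r :=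
        stayOutWeight_add_succ_le S (fun _ _ => nonneg_of_mem_rowStochastic hP) hr _ x
      _ ≤ r ^ (j + 1) := by rw [pow_succ]; exact mul_le_mul_of_nonneg_right ih hr0

lemma pow_succ_apply_pos (hP : P ∈ rowStochastic ℝ X) {m : ℕ} (hm : ∀ i j, 0 < (P ^ m) i j)
    (i j : X) : 0 < (P ^ (m + 1)) i j := by
  have hnn : ∀ u, 0 ≤ P i u := fun _ => nonneg_of_mem_rowStochastic hP
  obtain ⟨u, -, hu⟩ := (sum_pos_iff_of_nonneg fun u _ => hnn u).mp
    (sum_row_of_mem_rowStochastic hP i ▸ one_pos)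
  rw [pow_succ', mul_apply]
  exact (sum_pos_iff_of_nonneg fun v _ => mul_nonneg (hnn v) (hm v j).le).mpr
    ⟨u, mem_univ u, mul_pos hu (hm u j)⟩

lemma tendsto_stayOutWeight (hP : P ∈ rowStochastic ℝ X) (hS : S.Nonempty)
    (hirr : ∃ m, ∀ i j, 0 < (P ^ m) i j) (x : X) :
    Tendsto (fun n => P.stayOutWeight S n x) atTop (𝓝 0) := by
  obtain ⟨m, hm⟩ := hirr
  obtain ⟨s, hs⟩ := hS
  have : Nonempty X := ⟨x⟩
  obtain ⟨z₀, hz₀⟩ := Finite.exists_max (P.stayOutWeight S m)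
  set r := P.stayOutWeight S m z₀
  have hnn : ∀ i j, 0 ≤ P i j := fun _ _ => nonneg_of_mem_rowStochastic hP
  have hr0 : 0 ≤ r := stayOutWeight_nonneg S hnn m z₀
  have hr1 : r < 1 := stayOutWeight_lt_one S hP hs (pow_succ_apply_pos hP hm z₀ s)
  refine squeeze_zero (fun n => stayOutWeight_nonneg S hnn n x) (fun n => ?_)
    ((tendsto_pow_atTop_nhds_zero_of_lt_one hr0 hr1).comp
      (Nat.tendsto_div_const_atTop m.succ_ne_zero))
  exact (stayOutWeight_antitone S hP x (Nat.div_mul_le_self n (m + 1))).trans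
    (stayOutWeight_mul_le_pow S hP hr0 hz₀ _ x)

lemma sum_mem_tsum_excursionWeight (hP : P ∈ rowStochastic ℝ X) (hS : S.Nonempty)
    (hirr : ∃ m, ∀ i j, 0 < (P ^ m) i j) (x : X) :
    ∑ y ∈ S, ∑' k, P.excursionWeight S k x y = P.stayOutWeight S 0 x := by
  have hnn : ∀ i j, 0 ≤ P i j := fun _ _ => nonneg_of_mem_rowStochastic hP
  rw [← Summable.tsum_finsetSum fun y hy => summable_excursionWeight S hP hy]
  refine ((hasSum_iff_tendsto_nat_of_nonneg
    (fun k => sum_nonneg fun y _ => excursionWeight_nonneg S hnn k x y) _).mpr ?_).tsum_eq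
  simp only [sum_range_sum_mem_excursionWeight S hP]
  simpa using (tendsto_stayOutWeight S hP hS hirr x).const_sub (P.stayOutWeight S 0 x)

end Matrix

theorem stmt10_general {X : Type*} [Fintype X] [DecidableEq X]
    (P : X → X → ℝ)
    (hnn : ∀ x y, 0 ≤ P x y) (hrow : ∀ x, ∑ y, P x y = 1)
    (hirr : ∃ m : ℕ, ∀ x y : X, 0 < ((Matrix.of P) ^ m) x y)
    (S : Finset X) (hS : S.Nonempty)
    (x : X) :
    (∀ y ∈ S, Summable (fun k : ℕ =>
        ∑ q : Fin (k + 1) → {z : X // z ∉ S},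
          P x (q 0) * (∏ i : Fin k, P (q i.castSucc) (q i.succ)) * P (q (Fin.last k)) y)) ∧
    ∑ y ∈ S, (P x y + ∑' k : ℕ,
        ∑ q : Fin (k + 1) → {z : X // z ∉ S},
          P x (q 0) * (∏ i : Fin k, P (q i.castSucc) (q i.succ)) * P (q (Fin.last k)) y)
      = 1 := by
  have hP : Matrix.of P ∈ Matrix.rowStochastic ℝ X :=
    Matrix.mem_rowStochastic_iff_sum.mpr ⟨hnn, hrow⟩
  refine ⟨fun y hy => Matrix.summable_excursionWeight S hP hy, ?_⟩
  change ∑ y ∈ S, (P x y + ∑' k, (Matrix.of P).excursionWeight S k x y) = 1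
  rw [sum_add_distrib, Matrix.sum_mem_tsum_excursionWeight S hP hS hirr,
    Matrix.stayOutWeight_zero]
  exact (sum_add_sum_subtype_notMem S (P x)).trans (hrow x)

/-- Induced Markov chain on a subset is row-stochastic.  Let `P` be the transition matrix
of a finite irreducible Markov chain, `S` a nonempty proper subset of the state space, and
for `x, y ∈ S` let
`P̃(x,y) = P(x,y) + Σ_{k≥0} Σ_{x₁,…,x_{k+1} ∉ S} P(x,x₁)⋯P(x_{k+1},y)`.
Then each excursion series converges and `Σ_{y ∈ S} P̃(x,y) = 1`. -/
theorem stmt10 {X : Type*} [Fintype X] [DecidableEq X]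
    (P : X → X → ℝ)
    (hnn : ∀ x y, 0 ≤ P x y) (hrow : ∀ x, ∑ y, P x y = 1)
    (hirr : ∃ m : ℕ, ∀ x y : X, 0 < ((Matrix.of P) ^ m) x y)
    (S : Finset X) (hS : S.Nonempty) (hS' : S ≠ Finset.univ)
    (x : X) (hx : x ∈ S) :
    (∀ y ∈ S, Summable (fun k : ℕ =>
        ∑ q : Fin (k + 1) → {z : X // z ∉ S},
          P x (q 0) * (∏ i : Fin k, P (q i.castSucc) (q i.succ)) * P (q (Fin.last k)) y)) ∧
    ∑ y ∈ S, (P x y + ∑' k : ℕ,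
        ∑ q : Fin (k + 1) → {z : X // z ∉ S},
          P x (q 0) * (∏ i : Fin k, P (q i.castSucc) (q i.succ)) * P (q (Fin.last k)) y)
      = 1 :=
  stmt10_general P hnn hrow hirr S hS x
end

section
/- For n = 2m, the central binomial coefficient satisfies 2^n/√(π(n/2 + 1/3)) ≤ C(n, n/2) ≤ 2^n/√(π(n/2 + 1/4)). -/
/-!
The ratio `a m = C(2m, m) / 4 ^ m` satisfies `a (m + 1) (2m + 2) = a m (2m + 1)`, which makes
`a m ^ 2 (m + 1/4)` increasing and `a m ^ 2 (m + 1/3)` decreasing. Wallis' product says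
`a m ^ 2 (2m + 1) → 2 / π`, so both sequences tend to `1 / π` and are bounded by it on either side.
-/

open Filter Topology Real

noncomputable def centralBinomRatio (m : ℕ) : ℝ := m.centralBinom / 4 ^ m

lemma centralBinomRatio_succ (m : ℕ) :
    centralBinomRatio (m + 1) * (2 * m + 2) = centralBinomRatio m * (2 * m + 1) := by
  have h : ((m + 1 : ℕ) : ℝ) * (m + 1).centralBinom = 2 * (2 * m + 1) * m.centralBinom := by
    exact_mod_cast m.succ_mul_centralBinom_succ
  unfold centralBinomRatio
  push_cast at h
  field_simp
  linear_combination (2 * (4 : ℝ) ^ m) * h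

lemma Real.Wallis.W_eq_inv_centralBinomRatio (m : ℕ) :
    Wallis.W m = (centralBinomRatio m ^ 2 * (2 * m + 1))⁻¹ := by
  have hchoose : (m.centralBinom : ℝ) = (2 * m).factorial / (m.factorial * m.factorial) := by
    rw [Nat.centralBinom_eq_two_mul_choose, Nat.cast_choose ℝ (by omega : m ≤ 2 * m),
      show 2 * m - m = m by omega]
  have hpow : (2 : ℝ) ^ (4 * m) = (4 ^ m) ^ 2 := by
    rw [← pow_mul, show (4 : ℝ) = 2 ^ 2 by norm_num, ← pow_mul]
    ring_nf
  rw [Wallis.W_eq_factorial_ratio, centralBinomRatio, hchoose, hpow]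
  field_simp

lemma tendsto_centralBinomRatio_sq_mul_two_mul_add_one :
    Tendsto (fun m : ℕ ↦ centralBinomRatio m ^ 2 * (2 * m + 1)) atTop (𝓝 (2 / π)) := by
  have h := Wallis.tendsto_W_nhds_pi_div_two.inv₀ (by positivity)
  rw [inv_div] at h
  refine h.congr fun m ↦ ?_
  rw [Wallis.W_eq_inv_centralBinomRatio, inv_inv]

lemma tendsto_centralBinomRatio_sq : Tendsto (fun m ↦ centralBinomRatio m ^ 2) atTop (𝓝 0) := by
  have h : Tendsto (fun m : ℕ ↦ (2 * (m : ℝ) + 1)⁻¹) atTop (𝓝 0) :=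
    tendsto_inv_atTop_zero.comp <| tendsto_atTop_add_const_right _ _ <|
      tendsto_natCast_atTop_atTop.const_mul_atTop two_pos
  simpa using (tendsto_centralBinomRatio_sq_mul_two_mul_add_one.mul h).congr fun m ↦ by
    field_simp

lemma tendsto_centralBinomRatio_sq_mul_add (c : ℝ) :
    Tendsto (fun m ↦ centralBinomRatio m ^ 2 * (m + c)) atTop (𝓝 π⁻¹) := by
  have h := (tendsto_centralBinomRatio_sq_mul_two_mul_add_one.div_const 2).add
    (tendsto_centralBinomRatio_sq.mul_const (c - 1 / 2))
  rw [zero_mul, add_zero, div_div_cancel_left' two_ne_zero] at h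
  exact h.congr fun m ↦ by ring

lemma centralBinomRatio_succ_sq_mul (m : ℕ) (c : ℝ) :
    centralBinomRatio (m + 1) ^ 2 * (m + 1 + c) * (2 * m + 2) ^ 2 =
      centralBinomRatio m ^ 2 * ((2 * m + 1) ^ 2 * (m + 1 + c)) := by
  linear_combination (centralBinomRatio (m + 1) * (2 * m + 2) + centralBinomRatio m * (2 * m + 1))
    * (m + 1 + c) * centralBinomRatio_succ m

lemma monotone_centralBinomRatio_sq_mul_add_quarter :
    Monotone fun m ↦ centralBinomRatio m ^ 2 * (m + 1 / 4) := by
  refine monotone_nat_of_le_succ fun m ↦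
    le_of_mul_le_mul_right ?_ (by positivity : (0 : ℝ) < (2 * m + 2) ^ 2)
  push_cast
  rw [centralBinomRatio_succ_sq_mul]
  nlinarith [sq_nonneg (centralBinomRatio m)]

lemma antitone_centralBinomRatio_sq_mul_add_third :
    Antitone fun m ↦ centralBinomRatio m ^ 2 * (m + 1 / 3) := by
  refine antitone_nat_of_succ_le fun m ↦
    le_of_mul_le_mul_right ?_ (by positivity : (0 : ℝ) < (2 * m + 2) ^ 2)
  push_cast
  rw [centralBinomRatio_succ_sq_mul]
  nlinarith [mul_nonneg (sq_nonneg (centralBinomRatio m)) m.cast_nonneg]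

lemma le_div_sqrt_iff {x y t : ℝ} (hx : 0 ≤ x) (hy : 0 ≤ y) (ht : 0 < t) :
    x ≤ y / √t ↔ x ^ 2 * t ≤ y ^ 2 := by
  rw [le_div_iff₀ (sqrt_pos.2 ht), ← pow_le_pow_iff_left₀ (by positivity) hy two_ne_zero,
    mul_pow, sq_sqrt ht.le]

lemma div_sqrt_le_iff {x y t : ℝ} (hx : 0 ≤ x) (hy : 0 ≤ y) (ht : 0 < t) :
    y / √t ≤ x ↔ y ^ 2 ≤ x ^ 2 * t := by
  rw [div_le_iff₀ (sqrt_pos.2 ht), ← pow_le_pow_iff_left₀ hy (by positivity) two_ne_zero,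
    mul_pow, sq_sqrt ht.le]

theorem stmt17_general (m : ℕ) :
    (2 : ℝ) ^ (2 * m) / Real.sqrt (Real.pi * ((2 * m : ℝ) / 2 + 1 / 3))
        ≤ ((2 * m).choose m : ℝ) ∧
    ((2 * m).choose m : ℝ)
        ≤ (2 : ℝ) ^ (2 * m) / Real.sqrt (Real.pi * ((2 * m : ℝ) / 2 + 1 / 4)) := by
  have lower : π⁻¹ ≤ centralBinomRatio m ^ 2 * (m + 1 / 3) :=
    antitone_centralBinomRatio_sq_mul_add_third.le_of_tendsto
      (tendsto_centralBinomRatio_sq_mul_add _) m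
  have upper : centralBinomRatio m ^ 2 * (m + 1 / 4) ≤ π⁻¹ :=
    monotone_centralBinomRatio_sq_mul_add_quarter.ge_of_tendsto
      (tendsto_centralBinomRatio_sq_mul_add _) m
  rw [← Nat.centralBinom_eq_two_mul_choose, pow_mul, show (2 : ℝ) ^ 2 = 4 by norm_num,
    mul_div_cancel_left₀ _ two_ne_zero]
  rw [centralBinomRatio, div_pow, div_mul_eq_mul_div] at lower upper
  rw [le_div_iff₀ (by positivity), inv_mul_le_iff₀ pi_pos] at lower
  rw [div_le_iff₀ (by positivity), ← div_eq_inv_mul, le_div_iff₀ pi_pos] at upper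
  constructor
  · rw [div_sqrt_le_iff (by positivity) (by positivity) (by positivity)]
    linarith
  · rw [le_div_sqrt_iff (by positivity) (by positivity) (by positivity)]
    linarith

/-- For even `n = 2m ≥ 2`, the central binomial coefficient satisfies
`2^n/√(π(n/2 + 1/3)) ≤ C(n, n/2) ≤ 2^n/√(π(n/2 + 1/4))`. -/
theorem stmt17 (m : ℕ) (hm : 1 ≤ m) :
    (2 : ℝ) ^ (2 * m) / Real.sqrt (Real.pi * ((2 * m : ℝ) / 2 + 1 / 3))
        ≤ ((2 * m).choose m : ℝ) ∧
    ((2 * m).choose m : ℝ)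
        ≤ (2 : ℝ) ^ (2 * m) / Real.sqrt (Real.pi * ((2 * m : ℝ) / 2 + 1 / 4)) :=
  stmt17_general m
end
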